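/- Let F(z) = z²/2 − 2z + log z. For every t > 0, the derivative with respect to t of Re(F(1 + t·e^{iπ/3})) equals −t²(2 + t)/(2(1 + t + t²)), which is strictly negative; hence t ↦ Re(F(1 + t·e^{iπ/3})) is strictly decreasing on (0,∞). -/

import Mathlib

/-!
On the ray `z = 1 + t e^{iπ/3}` one has `Re z = 1 + t/2`, `Im z = (√3/2) t` and `|z|² = 1 + t + t²`,
so `Re F(z) = -3/2 - t/2 - t²/4 + log(1 + t + t²)/2` is an explicit real function of `t`; its
derivative `-1/2 - t/2 + (1 + 2t)/(2(1 + t + t²))` simplifies to `-t²(2 + t)/(2(1 + t + t²))`,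
which is negative for `t > 0`, and the mean value theorem gives strict monotonicity.
-/

open Complex

lemma Complex.exp_pi_div_three_mul_I :
    exp (((Real.pi / 3 : ℝ) : ℂ) * I) = 1 / 2 + (Real.sqrt 3 / 2 : ℝ) * I := by
  rw [exp_mul_I, ← ofReal_cos, ← ofReal_sin, Real.cos_pi_div_three, Real.sin_pi_div_three]
  push_cast
  ring

lemma Complex.re_sq_div_two_sub_two_mul_add_log (z : ℂ) :
    (z ^ 2 / 2 - 2 * z + log z).re
      = (z.re ^ 2 - z.im ^ 2) / 2 - 2 * z.re + Real.log (normSq z) / 2 := by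
  rw [add_re, log_re, norm_def, Real.log_sqrt (normSq_nonneg z)]
  simp [sq]

noncomputable def rayProfile (t : ℝ) : ℝ := -3 / 2 - t / 2 - t ^ 2 / 4 + Real.log (1 + t + t ^ 2) / 2

lemma re_sq_div_two_sub_two_mul_add_log_eq_rayProfile (t : ℝ) :
    let z : ℂ := 1 + t * exp (((Real.pi / 3 : ℝ) : ℂ) * I)
    (z ^ 2 / 2 - 2 * z + log z).re = rayProfile t := by
  intro z
  have hz : z = 1 + t * (1 / 2 + (Real.sqrt 3 / 2 : ℝ) * I) := by
    rw [← exp_pi_div_three_mul_I]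
  have hre : z.re = 1 + t / 2 := by simp [hz, div_eq_mul_inv, mul_comm]
  have him : z.im = t * (Real.sqrt 3 / 2) := by simp [hz]
  have h3 : Real.sqrt 3 ^ 2 = 3 := Real.sq_sqrt (by norm_num)
  have hnormSq : normSq z = 1 + t + t ^ 2 := by
    rw [normSq_apply, hre, him]
    linear_combination t ^ 2 / 4 * h3
  rw [re_sq_div_two_sub_two_mul_add_log, hnormSq, hre, him, rayProfile]
  linear_combination -t ^ 2 / 8 * h3

lemma one_add_self_add_sq_pos (t : ℝ) : 0 < 1 + t + t ^ 2 := by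
  nlinarith [sq_nonneg (2 * t + 1)]

lemma hasDerivAt_rayProfile (t : ℝ) :
    HasDerivAt rayProfile (-(t ^ 2 * (2 + t)) / (2 * (1 + t + t ^ 2))) t := by
  have hq : HasDerivAt (fun s : ℝ => 1 + s + s ^ 2) (1 + 2 * t) t := by
    simpa using ((hasDerivAt_id' t).const_add 1).fun_add (hasDerivAt_pow 2 t)
  have hpoly : HasDerivAt (fun s : ℝ => -3 / 2 - s / 2 - s ^ 2 / 4) (-1 / 2 - t / 2) t :=
    (((hasDerivAt_id' t).div_const 2).const_sub (-3 / 2)).fun_sub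
      ((hasDerivAt_pow 2 t).div_const 4) |>.congr_deriv (by push_cast; ring)
  have hq0 := (one_add_self_add_sq_pos t).ne'
  refine (hpoly.fun_add ((hq.log hq0).div_const 2)).congr_deriv ?_
  field_simp
  ring

lemma neg_sq_mul_two_add_div_neg {t : ℝ} (ht : 0 < t) :
    -(t ^ 2 * (2 + t)) / (2 * (1 + t + t ^ 2)) < 0 :=
  div_neg_of_neg_of_pos (by nlinarith [mul_pos ht ht]) (by nlinarith [one_add_self_add_sq_pos t])

/-- For `F z = z²/2 − 2z + log z` and `g t = Re (F (1 + t e^{iπ/3}))`, for every `t > 0`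
the derivative of `g` at `t` equals `−t²(2+t)/(2(1+t+t²))`, which is negative; hence `g`
is strictly decreasing on `(0,∞)`. -/
theorem stmt_3 (F : ℂ → ℂ) (hF : ∀ z : ℂ, F z = z ^ 2 / 2 - 2 * z + Complex.log z)
    (g : ℝ → ℝ)
    (hg : ∀ t : ℝ, g t =
      (F (1 + (t : ℂ) * Complex.exp (((Real.pi / 3 : ℝ) : ℂ) * Complex.I))).re) :
    (∀ t : ℝ, 0 < t →
        HasDerivAt g (-(t ^ 2 * (2 + t)) / (2 * (1 + t + t ^ 2))) t ∧
        -(t ^ 2 * (2 + t)) / (2 * (1 + t + t ^ 2)) < 0) ∧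
    StrictAntiOn g (Set.Ioi (0 : ℝ)) := by
  have hg_eq : g = rayProfile := by
    funext t
    rw [hg, hF, re_sq_div_two_sub_two_mul_add_log_eq_rayProfile]
  have hderiv (t : ℝ) := hg_eq ▸ hasDerivAt_rayProfile t
  refine ⟨fun t ht => ⟨hderiv t, neg_sq_mul_two_add_div_neg ht⟩, ?_⟩
  refine strictAntiOn_of_deriv_neg (convex_Ioi 0)
    (fun t _ => (hderiv t).continuousAt.continuousWithinAt) fun t ht => ?_
  rw [(hderiv t).deriv]
  exact neg_sq_mul_two_add_div_neg (interior_subset ht)
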